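/- As ε → 0⁺, the value of the entropic-regularized OT problem converges to the value of the unregularized OT problem: min_{P ∈ U(α,β)} [⟨P,C⟩ − εH(P)] → min_{P ∈ U(α,β)} ⟨P,C⟩. -/

import Mathlib

/-!
Every coupling has entries in `[0, 1]`, so each entropy summand `x (log x - 1)` lies in
`[-1, 0]` and `0 ≤ H ≤ N M` on `U(α, β)`. Subtracting `ε H` therefore moves the objective by at
most `ε N M` uniformly on `U(α, β)`, hence moves its infimum by at most `ε N M`.
-/

open Finset Real Filter Topology

section Perturbation

variable {X : Type*} {s : Set X} {f g : X → ℝ} {δ : ℝ}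

theorem Set.setOf_exists_mem_eq_eq_image (s : Set X) (f : X → ℝ) :
    {v | ∃ x ∈ s, v = f x} = f '' s :=
  Set.ext fun _ => exists_congr fun _ => and_congr_right' eq_comm

theorem csInf_image_le_csInf_image_add (hs : s.Nonempty) (hg : BddBelow (g '' s))
    (hgf : ∀ x ∈ s, g x ≤ f x + δ) : sInf (g '' s) ≤ sInf (f '' s) + δ := by
  rw [← sub_le_iff_le_add]
  refine le_csInf (hs.image f) ?_
  rintro _ ⟨x, hx, rfl⟩
  exact sub_le_iff_le_add.2 ((csInf_le hg ⟨x, hx, rfl⟩).trans (hgf x hx))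

theorem abs_sInf_image_sub_sInf_image_le (hδ : 0 ≤ δ) (hf : BddBelow (f '' s))
    (hfg : ∀ x ∈ s, |g x - f x| ≤ δ) : |sInf (g '' s) - sInf (f '' s)| ≤ δ := by
  rcases s.eq_empty_or_nonempty with rfl | hs
  · simpa using hδ
  have hg : BddBelow (g '' s) := by
    obtain ⟨m, hm⟩ := hf
    refine ⟨m - δ, ?_⟩
    rintro _ ⟨x, hx, rfl⟩
    linarith [hm ⟨x, hx, rfl⟩, (abs_sub_le_iff.1 (hfg x hx)).2]
  refine abs_sub_le_iff.2 ⟨?_, ?_⟩ <;> rw [sub_le_iff_le_add']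
  · exact csInf_image_le_csInf_image_add hs hg fun x hx =>
      by linarith [(abs_sub_le_iff.1 (hfg x hx)).1]
  · exact csInf_image_le_csInf_image_add hs hf fun x hx =>
      by linarith [(abs_sub_le_iff.1 (hfg x hx)).2]

theorem tendsto_sInf_image_sub_mul {H : X → ℝ} {B : ℝ} (hB : 0 ≤ B)
    (hf : BddBelow (f '' s)) (hH : Set.MapsTo H s (Set.Icc 0 B)) :
    Tendsto (fun ε : ℝ => sInf ((fun x => f x - ε * H x) '' s)) (𝓝[>] 0)
      (𝓝 (sInf (f '' s))) := by
  have hdist : ∀ ε ∈ Set.Ioi (0 : ℝ),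
      dist (sInf ((fun x => f x - ε * H x) '' s)) (sInf (f '' s)) ≤ ε * B := by
    intro ε hε
    refine abs_sInf_image_sub_sInf_image_le (mul_nonneg hε.le hB) hf fun x hx => ?_
    rw [sub_sub_cancel_left, abs_neg, abs_of_nonneg (mul_nonneg hε.le (hH hx).1)]
    exact mul_le_mul_of_nonneg_left (hH hx).2 hε.le
  have hbound : Tendsto (fun ε : ℝ => ε * B) (𝓝[>] 0) (𝓝 0) := by
    simpa using (tendsto_id.mul_const B).mono_left (nhdsWithin_le_nhds (a := (0 : ℝ)))
  exact tendsto_iff_dist_tendsto_zero.2 <| squeeze_zero' (.of_forall fun _ => dist_nonneg)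
    (eventually_nhdsWithin_of_forall hdist) hbound

end Perturbation

theorem neg_one_le_mul_log_sub_one {x : ℝ} (hx : 0 ≤ x) : -1 ≤ x * (log x - 1) := by
  linarith [self_sub_one_le_mul_log hx]

theorem mul_log_sub_one_nonpos {x : ℝ} (hx₀ : 0 ≤ x) (hx₁ : x ≤ 1) :
    x * (log x - 1) ≤ 0 := by
  linarith [mul_log_nonpos hx₀ hx₁]

section Transport

variable {ι κ : Type*} [Fintype ι] [Fintype κ]

def transportPolytope (α : ι → ℝ) (β : κ → ℝ) : Set (ι → κ → ℝ) :=
  {P | (∀ i j, 0 ≤ P i j) ∧ (∀ i, ∑ j, P i j = α i) ∧ (∀ j, ∑ i, P i j = β j)}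

noncomputable def transportEntropy (P : ι → κ → ℝ) : ℝ :=
  -∑ i, ∑ j, P i j * (log (P i j) - 1)

variable {α : ι → ℝ} {β : κ → ℝ} {P : ι → κ → ℝ}

theorem le_one_of_mem_transportPolytope (hα : ∑ i, α i = 1) (hP : P ∈ transportPolytope α β)
    (i : ι) (j : κ) : P i j ≤ 1 := by
  obtain ⟨hP0, hProw, -⟩ := hP
  calc P i j ≤ ∑ j', P i j' := single_le_sum (fun j' _ => hP0 i j') (mem_univ j)
    _ ≤ ∑ i', ∑ j', P i' j' :=
      single_le_sum (f := fun i' => ∑ j', P i' j') (fun i' _ => sum_nonneg fun j' _ => hP0 i' j')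
        (mem_univ i)
    _ = 1 := by simp only [hProw, hα]

theorem transportEntropy_mem_Icc (hα : ∑ i, α i = 1) (hP : P ∈ transportPolytope α β) :
    transportEntropy P ∈ Set.Icc 0 ((Fintype.card ι : ℝ) * Fintype.card κ) := by
  have hP0 := hP.1
  constructor
  · exact neg_nonneg.2 <| sum_nonpos fun i _ => sum_nonpos fun j _ =>
      mul_log_sub_one_nonpos (hP0 i j) (le_one_of_mem_transportPolytope hα hP i j)
  · calc transportEntropy P = ∑ i, ∑ j, -(P i j * (log (P i j) - 1)) := by
          simp only [transportEntropy, sum_neg_distrib]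
      _ ≤ ∑ _i : ι, ∑ _j : κ, (1 : ℝ) :=
          sum_le_sum fun i _ => sum_le_sum fun j _ =>
            neg_le.1 (neg_one_le_mul_log_sub_one (hP0 i j))
      _ = (Fintype.card ι : ℝ) * Fintype.card κ := by simp

theorem bddBelow_transportCost_image (hα : ∑ i, α i = 1) (C : ι → κ → ℝ) :
    BddBelow ((fun P => ∑ i, ∑ j, P i j * C i j) '' transportPolytope α β) := by
  refine ⟨-∑ i, ∑ j, |C i j|, ?_⟩
  rintro _ ⟨P, hP, rfl⟩
  rw [← sum_neg_distrib]
  refine sum_le_sum fun i _ => ?_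
  rw [← sum_neg_distrib]
  refine sum_le_sum fun j _ => ?_
  have hPij : |P i j| ≤ 1 := abs_le.2
    ⟨by linarith [hP.1 i j], le_one_of_mem_transportPolytope hα hP i j⟩
  calc -|C i j| ≤ -|P i j * C i j| := by
        rw [abs_mul]; exact neg_le_neg (mul_le_of_le_one_left (abs_nonneg _) hPij)
    _ ≤ P i j * C i j := neg_abs_le _

end Transport

theorem entropic_OT_value_tendsto_OT_value_general
    (N M : ℕ) (α : Fin N → ℝ) (β : Fin M → ℝ)
    (hα1 : ∑ i, α i = 1)
    (C : Fin N → Fin M → ℝ)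
    (U : Set (Fin N → Fin M → ℝ))
    (hU : U = {P : Fin N → Fin M → ℝ | (∀ i j, 0 ≤ P i j) ∧
      (∀ i, ∑ j, P i j = α i) ∧ (∀ j, ∑ i, P i j = β j)})
    (H : (Fin N → Fin M → ℝ) → ℝ)
    (hH : H = fun P => -(∑ i, ∑ j, P i j * (Real.log (P i j) - 1))) :
    Tendsto
      (fun ε : ℝ => sInf {v : ℝ | ∃ P ∈ U,
        v = (∑ i, ∑ j, P i j * C i j) - ε * H P})
      (𝓝[>] 0)
      (𝓝 (sInf {v : ℝ | ∃ P ∈ U, v = ∑ i, ∑ j, P i j * C i j})) := by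
  subst hU hH
  simp only [Set.setOf_exists_mem_eq_eq_image]
  exact tendsto_sInf_image_sub_mul (by positivity) (bddBelow_transportCost_image hα1 C)
    fun P hP => transportEntropy_mem_Icc hα1 hP

/-- As `ε → 0⁺`, the value of the entropic-regularized OT problem converges to the value of
the unregularized OT problem. -/
theorem entropic_OT_value_tendsto_OT_value
    (N M : ℕ) (α : Fin N → ℝ) (β : Fin M → ℝ)
    (hα : ∀ i, 0 ≤ α i) (hβ : ∀ j, 0 ≤ β j)
    (hα1 : ∑ i, α i = 1) (hβ1 : ∑ j, β j = 1)
    (C : Fin N → Fin M → ℝ)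
    (U : Set (Fin N → Fin M → ℝ))
    (hU : U = {P : Fin N → Fin M → ℝ | (∀ i j, 0 ≤ P i j) ∧
      (∀ i, ∑ j, P i j = α i) ∧ (∀ j, ∑ i, P i j = β j)})
    (H : (Fin N → Fin M → ℝ) → ℝ)
    (hH : H = fun P => -(∑ i, ∑ j, P i j * (Real.log (P i j) - 1))) :
    Tendsto
      (fun ε : ℝ => sInf {v : ℝ | ∃ P ∈ U,
        v = (∑ i, ∑ j, P i j * C i j) - ε * H P})
      (𝓝[>] 0)
      (𝓝 (sInf {v : ℝ | ∃ P ∈ U, v = ∑ i, ∑ j, P i j * C i j})) :=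
  entropic_OT_value_tendsto_OT_value_general N M α β hα1 C U hU H hH
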